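/- Injectivity of the comparison from globular to cubical homotopy classes: let X be a topological space with a filtration X₀ ⊆ X₁ ⊆ ⋯ ⊆ X, let n ≥ 1, and let α, β : Dⁿ → X be continuous maps that are filtered for the globe filtration (α and β map the k-skeleton of the n-globe into X_k for all k, and Dⁿ into X_m for m ≥ n). Suppose there is a continuous map H : Iⁿ × [0,1] → X such that H(x,0) = α(φₙ(x)) and H(x,1) = β(φₙ(x)) for all x ∈ Iⁿ, for each t ∈ [0,1] the map H(·,t) is filtered for the cube filtration (it maps the k-skeleton of Iⁿ into X_k for all k < n, and Iⁿ into X_m for m ≥ n), and H(v,t) = H(v,0) for every vertex v of Iⁿ and every t ∈ [0,1]. Then there is a continuous map L : Dⁿ × [0,1] → X such that L(z,0) = α(z) and L(z,1) = β(z) for all z ∈ Dⁿ, for each t the map L(·,t) is filtered for the globe filtration, and L(w,t) = L(w,0) for every t ∈ [0,1] and each of the two points w = (0,…,0,1) and w = (0,…,0,−1). -/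

import Mathlib

/-!
In coordinates `φₙ(x)ⱼ = xⱼ √Γⱼ₊₁(x)` with `Γₘ(x) = ∏_{i ≥ m} (1 - xᵢ²)`. So `φₙ` forgets exactly
the coordinates `j` with `Γⱼ₊₁(x) = 0`, and the preimage of the `k`-skeleton of the globe is
`{Γₙ₋ₖ₋₁ = 0}`, which is larger than the `k`-skeleton of the cube.

A deformation `flow` of the cube first stretches all coordinates, so that those of absolute value
at least `1/2` reach `±1`, and then pushes each coordinate `m` towards `1` as `Γₘ₊₁` approaches `0`.
At every time `φₙ ∘ flow` factors through `φₙ` and preserves the preimages of the globe skeleta;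
at the end `flow` is constant on the fibres of `φₙ` and sends a section of `φₙ` over the
`k`-skeleton of the globe into the `k`-skeleton of the cube. Running `α ∘ φₙ ∘ flow`, then `H` at
the end of the flow, then `β ∘ φₙ ∘ flow` backwards gives a homotopy on `Iⁿ` that is constant on
the fibres of `φₙ`. It descends to `Dⁿ`, since `φₙ × id` is a closed surjection from a compact
space.
-/

/-- The comparison map φₙ : Iⁿ → Gⁿ, defined recursively by φ₁(x₁) = x₁ and
    φₙ(t, y) = (t·√(1 − ‖φₙ₋₁(y)‖²), φₙ₋₁(y)). -/
noncomputable def phi : (n : ℕ) → EuclideanSpace ℝ (Fin n) → EuclideanSpace ℝ (Fin n)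
  | 0, x => x
  | n + 1, x =>
    WithLp.toLp 2 (Fin.cons (x 0 * Real.sqrt (1 - ‖phi n (WithLp.toLp 2 fun i : Fin n => x i.succ)‖ ^ 2))
        (phi n (WithLp.toLp 2 fun i : Fin n => x i.succ)) : Fin (n + 1) → ℝ)

/-- The n-cube Iⁿ = [−1,1]ⁿ, inside Euclidean n-space. -/
def cube (n : ℕ) : Set (EuclideanSpace ℝ (Fin n)) := {x | ∀ i, |x i| ≤ 1}

/-- The n-disk Dⁿ = {x : ‖x‖ ≤ 1}, the underlying space of the n-globe Gⁿ. -/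
def disk (n : ℕ) : Set (EuclideanSpace ℝ (Fin n)) := {x | ‖x‖ ≤ 1}

/-- The `k`-skeleton of the `n`-globe: points of norm `1` whose first `n − k − 1`
coordinates vanish. -/
def globeSkel (n k : ℕ) : Set (EuclideanSpace ℝ (Fin n)) :=
  {z | ‖z‖ = 1 ∧ ∀ j : Fin n, (j : ℕ) < n - k - 1 → z j = 0}

/-- The `k`-skeleton of the `n`-cube: points of `Iⁿ` with at least `n − k` coordinates
of absolute value `1`. -/
def cubeSkel (n k : ℕ) : Set (EuclideanSpace ℝ (Fin n)) :=
  {x | (∀ i, |x i| ≤ 1) ∧ n - k ≤ (Finset.univ.filter fun i : Fin n => |x i| = 1).card}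

/-- The two vertices `(0, …, 0, ±1)` of the `n`-globe. -/
noncomputable def pole (n : ℕ) (a : ℝ) : EuclideanSpace ℝ (Fin n) :=
  WithLp.toLp 2 (fun j => if (j : ℕ) = n - 1 then a else 0 : Fin n → ℝ)

open Finset

namespace CubeGlobe

variable {n : ℕ}

lemma filter_le_eq_empty {m : ℕ} (h : n ≤ m) :
    univ.filter (fun i : Fin n => m ≤ (i : ℕ)) = ∅ :=
  filter_false_of_mem fun i _ => Nat.not_le.2 (i.isLt.trans_le h)

lemma filter_le_eq_insert {m : ℕ} (hm : m < n) :
    univ.filter (fun i : Fin n => m ≤ (i : ℕ)) =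
      insert ⟨m, hm⟩ (univ.filter fun i : Fin n => m + 1 ≤ (i : ℕ)) := by
  ext i
  simp only [mem_filter, mem_univ, true_and, mem_insert, Fin.ext_iff]
  omega

lemma one_sub_sq_eq_zero_iff {a : ℝ} : 1 - a ^ 2 = 0 ↔ |a| = 1 := by
  rw [sub_eq_zero, eq_comm, ← sq_abs, pow_eq_one_iff_of_nonneg (abs_nonneg a) two_ne_zero]

def tailNormSq (z : EuclideanSpace ℝ (Fin n)) (m : ℕ) : ℝ :=
  ∑ i ∈ univ.filter (fun i : Fin n => m ≤ (i : ℕ)), z i ^ 2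

/-- `Γₘ(x)`. -/
def tailProd (x : EuclideanSpace ℝ (Fin n)) (m : ℕ) : ℝ :=
  ∏ i ∈ univ.filter (fun i : Fin n => m ≤ (i : ℕ)), (1 - x i ^ 2)

section TailNormSq

variable (z : EuclideanSpace ℝ (Fin n))

lemma tailNormSq_of_le {m : ℕ} (h : n ≤ m) : tailNormSq z m = 0 := by
  rw [tailNormSq, filter_le_eq_empty h, sum_empty]

lemma tailNormSq_eq_add {m : ℕ} (hm : m < n) :
    tailNormSq z m = z ⟨m, hm⟩ ^ 2 + tailNormSq z (m + 1) := by
  rw [tailNormSq, filter_le_eq_insert hm, sum_insert (by simp)]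
  rfl

lemma tailNormSq_antitone : Antitone (tailNormSq z) := fun _ _ h =>
  sum_le_sum_of_subset_of_nonneg (monotone_filter_right _ fun _ _ hi => h.trans hi)
    fun _ _ _ => sq_nonneg _

lemma tailNormSq_eq_norm_sq {m : ℕ} (h : ∀ i : Fin n, (i : ℕ) < m → z i = 0) :
    tailNormSq z m = ‖z‖ ^ 2 := by
  rw [EuclideanSpace.real_norm_sq_eq, ← sum_filter_add_sum_filter_not univ
    (fun i : Fin n => m ≤ (i : ℕ)), sum_eq_zero (s := univ.filter fun i : Fin n => ¬m ≤ (i : ℕ))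
    fun i hi => ?_, add_zero]
  · rfl
  · rw [h i (by simpa using hi), sq, zero_mul]

lemma tailNormSq_le_one (hz : ‖z‖ ≤ 1) (m : ℕ) : tailNormSq z m ≤ 1 :=
  calc tailNormSq z m ≤ tailNormSq z 0 := tailNormSq_antitone z m.zero_le
    _ = ‖z‖ ^ 2 := tailNormSq_eq_norm_sq z fun _ h => absurd h (Nat.not_lt_zero _)
    _ ≤ 1 := pow_le_one₀ (norm_nonneg z) hz

lemma sq_add_tailNormSq_le_one (hz : ‖z‖ ≤ 1) (j : Fin n) :
    z j ^ 2 + tailNormSq z (j + 1) ≤ 1 :=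
  (tailNormSq_eq_add z j.isLt).symm.trans_le (tailNormSq_le_one z hz j)

end TailNormSq

section TailProd

variable (x : EuclideanSpace ℝ (Fin n))

lemma tailProd_of_le {m : ℕ} (h : n ≤ m) : tailProd x m = 1 := by
  rw [tailProd, filter_le_eq_empty h, prod_empty]

lemma tailProd_eq_mul {m : ℕ} (hm : m < n) :
    tailProd x m = (1 - x ⟨m, hm⟩ ^ 2) * tailProd x (m + 1) := by
  rw [tailProd, filter_le_eq_insert hm, prod_insert (by simp)]
  rfl

lemma tailProd_eq_zero_iff (m : ℕ) :
    tailProd x m = 0 ↔ ∃ i : Fin n, m ≤ (i : ℕ) ∧ |x i| = 1 := by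
  simp [tailProd, prod_eq_zero_iff, one_sub_sq_eq_zero_iff]

lemma tailProd_eq_zero_of_le {m m' : ℕ} (h : m ≤ m') (h0 : tailProd x m' = 0) :
    tailProd x m = 0 := by
  obtain ⟨i, hi, hx⟩ := (tailProd_eq_zero_iff x m').1 h0
  exact (tailProd_eq_zero_iff x m).2 ⟨i, h.trans hi, hx⟩

variable {x}

lemma tailProd_nonneg (hx : x ∈ cube n) (m : ℕ) : 0 ≤ tailProd x m :=
  prod_nonneg fun i _ => sub_nonneg.2 ((sq_le_one_iff_abs_le_one _).2 (hx i))

lemma three_quarters_pow_le_tailProd {m : ℕ} (h : ∀ i : Fin n, m ≤ (i : ℕ) → |x i| < 1 / 2) :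
    (3 / 4 : ℝ) ^ n ≤ tailProd x m := by
  have hcard : #(univ.filter fun i : Fin n => m ≤ (i : ℕ)) ≤ n :=
    (card_filter_le _ _).trans_eq (card_fin n)
  calc (3 / 4 : ℝ) ^ n ≤ (3 / 4) ^ #(univ.filter fun i : Fin n => m ≤ (i : ℕ)) :=
        pow_le_pow_of_le_one (by norm_num) (by norm_num) hcard
    _ = ∏ _i ∈ univ.filter (fun i : Fin n => m ≤ (i : ℕ)), (3 / 4 : ℝ) := (prod_const _).symm
    _ ≤ tailProd x m := prod_le_prod (fun _ _ => by norm_num) fun i hi => by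
        have hxi := h i (mem_filter.1 hi).2
        nlinarith [abs_nonneg (x i), sq_abs (x i)]

end TailProd

def euclTail (x : EuclideanSpace ℝ (Fin (n + 1))) : EuclideanSpace ℝ (Fin n) :=
  WithLp.toLp 2 fun i => x i.succ

lemma euclTail_mem_cube {x : EuclideanSpace ℝ (Fin (n + 1))} (hx : x ∈ cube (n + 1)) :
    euclTail x ∈ cube n :=
  fun i => hx i.succ

lemma tailProd_succ (x : EuclideanSpace ℝ (Fin (n + 1))) (m : ℕ) :
    tailProd x (m + 1) = tailProd (euclTail x) m := by
  rw [tailProd, tailProd, prod_filter, prod_filter, Fin.prod_univ_succ]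
  simp [euclTail]

lemma phi_succ (x : EuclideanSpace ℝ (Fin (n + 1))) :
    phi (n + 1) x = WithLp.toLp 2 (Fin.cons (x 0 * √(1 - ‖phi n (euclTail x)‖ ^ 2))
      (phi n (euclTail x)) : Fin (n + 1) → ℝ) :=
  rfl

section Phi

variable {x x' : EuclideanSpace ℝ (Fin n)}

lemma norm_phi_sq : ∀ {n : ℕ} {x : EuclideanSpace ℝ (Fin n)}, x ∈ cube n →
    ‖phi n x‖ ^ 2 = 1 - tailProd x 0
  | 0, x, _ => by simp [tailProd, EuclideanSpace.real_norm_sq_eq]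
  | n + 1, x, hx => by
    have htail := euclTail_mem_cube hx
    rw [EuclideanSpace.real_norm_sq_eq, Fin.sum_univ_succ, phi_succ]
    simp only [Fin.cons_zero, Fin.cons_succ]
    rw [← EuclideanSpace.real_norm_sq_eq, norm_phi_sq htail, mul_pow,
      Real.sq_sqrt (by linarith [tailProd_nonneg htail 0]), tailProd_eq_mul x n.succ_pos,
      Fin.zero_eta, tailProd_succ]
    ring

lemma phi_apply : ∀ {n : ℕ} {x : EuclideanSpace ℝ (Fin n)}, x ∈ cube n →
    ∀ j : Fin n, phi n x j = x j * √(tailProd x (j + 1))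
  | n + 1, x, hx, j => by
    have htail := euclTail_mem_cube hx
    rw [phi_succ, PiLp.toLp_apply]
    cases j using Fin.cases with
    | zero => rw [Fin.cons_zero, norm_phi_sq htail, sub_sub_cancel, Fin.val_zero, tailProd_succ]
    | succ i => rw [Fin.cons_succ, phi_apply htail, Fin.val_succ, tailProd_succ]; rfl

lemma continuous_phi : ∀ n : ℕ, Continuous (phi n)
  | 0 => continuous_id
  | n + 1 => by
    have htail : Continuous (euclTail (n := n)) :=
      (PiLp.continuous_toLp 2 _).comp
        (continuous_pi fun i => (continuous_apply i.succ).comp (PiLp.continuous_ofLp 2 _))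
    have hphi := (continuous_phi n).comp htail
    exact (PiLp.continuous_toLp 2 _).comp <| Continuous.finCons
      (((continuous_apply 0).comp (PiLp.continuous_ofLp 2 _)).mul
        (continuous_const.sub (hphi.norm.pow 2)).sqrt)
      ((PiLp.continuous_ofLp 2 _).comp hphi)

lemma norm_phi_le_one (hx : x ∈ cube n) : ‖phi n x‖ ≤ 1 :=
  (sq_le_one_iff₀ (norm_nonneg _)).1 <| by
    rw [norm_phi_sq hx]; linarith [tailProd_nonneg hx 0]

lemma tailProd_eq_one_sub_tailNormSq_phi (hx : x ∈ cube n) {m : ℕ} (hm : m ≤ n) :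
    tailProd x m = 1 - tailNormSq (phi n x) m := by
  induction hm using Nat.decreasingInduction with
  | self => rw [tailProd_of_le x le_rfl, tailNormSq_of_le _ le_rfl, sub_zero]
  | of_succ m hm ih =>
    rw [tailProd_eq_mul x hm, tailNormSq_eq_add _ hm, phi_apply hx, Fin.val_mk, mul_pow,
      Real.sq_sqrt (tailProd_nonneg hx _), ih]
    ring

lemma tailProd_eq_of_phi_eq (hx : x ∈ cube n) (hx' : x' ∈ cube n) (h : phi n x = phi n x')
    {m : ℕ} (hm : m ≤ n) : tailProd x m = tailProd x' m := by
  rw [tailProd_eq_one_sub_tailNormSq_phi hx hm, tailProd_eq_one_sub_tailNormSq_phi hx' hm, h]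

lemma eq_or_tailProd_eq_zero_of_phi_eq (hx : x ∈ cube n) (hx' : x' ∈ cube n)
    (h : phi n x = phi n x') (j : Fin n) : x j = x' j ∨ tailProd x (j + 1) = 0 := by
  refine or_iff_not_imp_right.2 fun h0 => ?_
  have hj := congrArg (· j) h
  simp only [phi_apply hx, phi_apply hx', ← tailProd_eq_of_phi_eq hx hx' h j.isLt] at hj
  exact mul_right_cancel₀ (Real.sqrt_ne_zero'.2 ((tailProd_nonneg hx _).lt_of_ne' h0)) hj

lemma phi_mem_globeSkel_iff (hx : x ∈ cube n) {k : ℕ} :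
    phi n x ∈ globeSkel n k ↔ tailProd x (n - k - 1) = 0 := by
  constructor
  · rintro ⟨hnorm, hzero⟩
    rw [tailProd_eq_one_sub_tailNormSq_phi hx (by omega), tailNormSq_eq_norm_sq _ hzero, hnorm]
    norm_num
  · intro h
    refine ⟨?_, fun j hj => ?_⟩
    · have := norm_phi_sq hx
      rw [tailProd_eq_zero_of_le x (Nat.zero_le _) h, sub_zero] at this
      exact (pow_eq_one_iff_of_nonneg (norm_nonneg _) two_ne_zero).1 this
    · rw [phi_apply hx, tailProd_eq_zero_of_le x (by omega) h, Real.sqrt_zero, mul_zero]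

end Phi

/-- A (discontinuous) section of `φₙ` over `Dⁿ`. Coordinates that `φₙ` forgets, those whose
later coordinates already exhaust the norm, are set to `1`. -/
noncomputable def phiSection (z : EuclideanSpace ℝ (Fin n)) : EuclideanSpace ℝ (Fin n) :=
  WithLp.toLp 2 fun j : Fin n =>
    if tailNormSq z (j + 1) < 1 then z j / √(1 - tailNormSq z (j + 1)) else 1

section PhiSection

variable {z : EuclideanSpace ℝ (Fin n)}

lemma phiSection_apply_of_lt {j : Fin n} (h : tailNormSq z (j + 1) < 1) :
    phiSection z j = z j / √(1 - tailNormSq z (j + 1)) :=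
  if_pos h

lemma phiSection_apply_of_eq_one {j : Fin n} (h : tailNormSq z (j + 1) = 1) :
    phiSection z j = 1 :=
  if_neg h.not_lt

lemma eq_zero_of_tailNormSq_eq_one (hz : ‖z‖ ≤ 1) {j : Fin n} (h : tailNormSq z (j + 1) = 1) :
    z j = 0 :=
  pow_eq_zero_iff two_ne_zero |>.1 <| by linarith [sq_add_tailNormSq_le_one z hz j, sq_nonneg (z j)]

lemma phiSection_mem_cube (hz : ‖z‖ ≤ 1) : phiSection z ∈ cube n := by
  intro j
  have hsq := sq_add_tailNormSq_le_one z hz j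
  rcases (tailNormSq_le_one z hz (j + 1)).lt_or_eq with h | h
  · rw [phiSection_apply_of_lt h, abs_div, abs_of_nonneg (Real.sqrt_nonneg _),
      div_le_one (Real.sqrt_pos.2 (by linarith))]
    exact Real.abs_le_sqrt (by linarith)
  · rw [phiSection_apply_of_eq_one h, abs_one]

lemma tailProd_phiSection (hz : ‖z‖ ≤ 1) {m : ℕ} (hm : m ≤ n) :
    tailProd (phiSection z) m = 1 - tailNormSq z m := by
  induction hm using Nat.decreasingInduction with
  | self => rw [tailProd_of_le _ le_rfl, tailNormSq_of_le _ le_rfl, sub_zero]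
  | of_succ m hm ih =>
    set j : Fin n := ⟨m, hm⟩
    rw [tailProd_eq_mul _ hm, tailNormSq_eq_add _ hm, ih]
    rcases (tailNormSq_le_one z hz (j + 1)).lt_or_eq with h | h
    · rw [phiSection_apply_of_lt h, div_pow, Real.sq_sqrt (by linarith)]
      field_simp
      ring
    · rw [h, eq_zero_of_tailNormSq_eq_one hz h]
      ring

lemma phi_phiSection (hz : ‖z‖ ≤ 1) : phi n (phiSection z) = z := by
  ext j
  rw [phi_apply (phiSection_mem_cube hz), tailProd_phiSection hz j.isLt]
  rcases (tailNormSq_le_one z hz (j + 1)).lt_or_eq with h | h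
  · rw [phiSection_apply_of_lt h, div_mul_cancel₀ _ (Real.sqrt_ne_zero'.2 (by linarith))]
  · rw [h, eq_zero_of_tailNormSq_eq_one hz h, sub_self, Real.sqrt_zero, mul_zero]

lemma abs_phiSection_apply (hz : ‖z‖ ≤ 1) {j : Fin n} (h : tailNormSq z j = 1) :
    |phiSection z j| = 1 := by
  rcases (tailNormSq_le_one z hz (j + 1)).lt_or_eq with h' | h'
  · have hzj : z j ^ 2 = 1 - tailNormSq z (j + 1) := by
      linarith [tailNormSq_eq_add z j.isLt]
    rw [phiSection_apply_of_lt h', ← one_sub_sq_eq_zero_iff, div_pow, ← hzj,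
      Real.sq_sqrt (sq_nonneg _), div_self (by rw [hzj]; linarith), sub_self]
  · rw [phiSection_apply_of_eq_one h', abs_one]

lemma tailNormSq_pole (a : ℝ) {m : ℕ} (hm : m < n) : tailNormSq (pole n a) m = a ^ 2 := by
  rw [tailNormSq, sum_eq_single_of_mem (⟨n - 1, by omega⟩ : Fin n) (by simp; omega)]
  · simp [pole]
  · intro i _ hi
    simp [pole, Fin.ext_iff.not.1 hi]

lemma phiSection_pole {a : ℝ} (ha : |a| = 1) (j : Fin n) :
    phiSection (pole n a) j = if (j : ℕ) = n - 1 then a else 1 := by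
  split_ifs with hj
  · have h0 : tailNormSq (pole n a) (j + 1) = 0 := tailNormSq_of_le _ (by omega)
    rw [phiSection_apply_of_lt (h0.trans_lt one_pos), h0]
    simp [pole, hj]
  · apply phiSection_apply_of_eq_one
    rw [tailNormSq_pole a (by omega), ← sq_abs, ha, one_pow]

end PhiSection

noncomputable def stretch (l a : ℝ) : ℝ :=
  Set.projIcc (-1) 1 (by norm_num) ((1 + l) * a)

lemma abs_stretch_le_one (l a : ℝ) : |stretch l a| ≤ 1 :=
  abs_le.2 (Set.projIcc (-1 : ℝ) 1 (by norm_num) ((1 + l) * a)).2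

lemma stretch_zero {a : ℝ} (ha : |a| ≤ 1) : stretch 0 a = a := by
  simp [stretch, Set.projIcc_of_mem _ (Set.mem_Icc.2 (abs_le.1 ha))]

lemma stretch_of_abs_eq_one {l a : ℝ} (hl : 0 ≤ l) (ha : |a| = 1) : stretch l a = a := by
  rcases (abs_eq zero_le_one).1 ha with rfl | rfl
  · rw [stretch, Set.projIcc_of_right_le _ (by linarith : (1 : ℝ) ≤ (1 + l) * 1)]
  · rw [stretch, Set.projIcc_of_le_left _ (by linarith : (1 + l) * -1 ≤ (-1 : ℝ))]

lemma abs_stretch_one {a : ℝ} (ha : 1 / 2 ≤ |a|) : |stretch 1 a| = 1 := by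
  rcases le_abs'.1 ha with h | h
  · simp [stretch, Set.projIcc_of_le_left _ (by linarith : (1 + 1) * a ≤ (-1 : ℝ))]
  · simp [stretch, Set.projIcc_of_right_le _ (by linarith : (1 : ℝ) ≤ (1 + 1) * a)]

lemma continuous_stretch : Continuous fun p : ℝ × ℝ => stretch p.1 p.2 :=
  continuous_subtype_val.comp <| continuous_projIcc.comp <|
    (continuous_const.add continuous_fst).mul continuous_snd

/-- Positive only where `Γₘ(x) < (3/4)ⁿ`, which forces a coordinate of absolute value `≥ 1/2`
from `m` on (`three_quarters_pow_le_tailProd`). After stretching that coordinate is `±1`, so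
moving the coordinates before it does not change `φₙ`. -/
noncomputable def gate (x : EuclideanSpace ℝ (Fin n)) (m : ℕ) : ℝ :=
  max 0 (1 - tailProd x m / (3 / 4) ^ n)

section Gate

variable {x : EuclideanSpace ℝ (Fin n)} {m : ℕ}

lemma gate_nonneg : 0 ≤ gate x m := le_max_left _ _

lemma gate_le_one (hx : x ∈ cube n) : gate x m ≤ 1 :=
  max_le zero_le_one <| sub_le_self _ (div_nonneg (tailProd_nonneg hx m) (by positivity))

lemma gate_eq_one (h : tailProd x m = 0) : gate x m = 1 := by
  simp [gate, h]

lemma gate_eq_zero_of_le (h : (3 / 4 : ℝ) ^ n ≤ tailProd x m) : gate x m = 0 :=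
  max_eq_left <| sub_nonpos.2 <| (one_le_div (by positivity)).2 h

lemma gate_of_le (h : n ≤ m) : gate x m = 0 :=
  gate_eq_zero_of_le <| (tailProd_of_le x h).symm ▸ pow_le_one₀ (by norm_num) (by norm_num)

lemma continuous_gate (m : ℕ) : Continuous fun x : EuclideanSpace ℝ (Fin n) => gate x m :=
  continuous_const.max <| continuous_const.sub <| Continuous.div_const
    (continuous_finsetProd _ fun i _ => continuous_const.sub
      (((continuous_apply i).comp (PiLp.continuous_ofLp 2 _)).pow 2)) _

/-- The last coordinate of absolute value `≥ 1/2` (from `l` on) has a closed gate. -/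
lemma exists_gate_eq_zero {l : ℕ} (h : ∃ i : Fin n, l ≤ (i : ℕ) ∧ 1 / 2 ≤ |x i|) :
    ∃ i : Fin n, l ≤ (i : ℕ) ∧ 1 / 2 ≤ |x i| ∧ gate x (i + 1) = 0 := by
  set S := univ.filter fun i : Fin n => l ≤ (i : ℕ) ∧ 1 / 2 ≤ |x i|
  have hS : S.Nonempty := by simpa [S, Finset.Nonempty] using h
  have hi := (mem_filter.1 (S.max'_mem hS)).2
  refine ⟨S.max' hS, hi.1, hi.2, gate_eq_zero_of_le <| three_quarters_pow_le_tailProd fun j hj => ?_⟩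
  by_contra hj'
  have := S.le_max' j (mem_filter.2 ⟨mem_univ _, by omega, not_lt.1 hj'⟩)
  rw [Fin.le_def] at this
  omega

end Gate

noncomputable def flow (x : EuclideanSpace ℝ (Fin n)) (s : ℝ) : EuclideanSpace ℝ (Fin n) :=
  WithLp.toLp 2 fun m : Fin n =>
    stretch (min s 1) (x m) +
      (Set.projIcc 0 1 zero_le_one (s - 1) : ℝ) * gate x (m + 1) * (1 - stretch (min s 1) (x m))

section Flow

variable {x x' : EuclideanSpace ℝ (Fin n)} {s : ℝ}

lemma flow_apply (x : EuclideanSpace ℝ (Fin n)) (s : ℝ) (m : Fin n) :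
    flow x s m = stretch (min s 1) (x m) +
      (Set.projIcc 0 1 zero_le_one (s - 1) : ℝ) * gate x (m + 1) * (1 - stretch (min s 1) (x m)) :=
  rfl

lemma flow_apply_of_le_one (hs : s ≤ 1) (m : Fin n) : flow x s m = stretch s (x m) := by
  rw [flow_apply, min_eq_left hs, Set.projIcc_of_le_left _ (by linarith)]
  simp

lemma flow_zero (hx : x ∈ cube n) : flow x 0 = x := by
  ext m
  rw [flow_apply_of_le_one zero_le_one, stretch_zero (hx m)]

lemma flow_two_apply (m : Fin n) :
    flow x 2 m = stretch 1 (x m) + gate x (m + 1) * (1 - stretch 1 (x m)) := by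
  rw [flow_apply, min_eq_right one_le_two, Set.projIcc_of_right_le _ (by norm_num)]
  simp

lemma flow_apply_of_gate_eq_zero {m : Fin n} (h : gate x (m + 1) = 0) :
    flow x s m = stretch (min s 1) (x m) := by
  rw [flow_apply, h, mul_zero, zero_mul, add_zero]

lemma flow_apply_of_eq_one {m : Fin n} (h : x m = 1) (hs : 0 ≤ s) : flow x s m = 1 := by
  rw [flow_apply, h, stretch_of_abs_eq_one (le_min hs zero_le_one) abs_one, sub_self, mul_zero,
    add_zero]

lemma flow_mem_cube (hx : x ∈ cube n) (s : ℝ) : flow x s ∈ cube n := by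
  intro m
  rw [flow_apply]
  have hp := abs_le.1 (abs_stretch_le_one (min s 1) (x m))
  have hc := (Set.projIcc (0 : ℝ) 1 zero_le_one (s - 1)).2
  have hc0 := mul_nonneg hc.1 (gate_nonneg (x := x) (m := m + 1))
  have hc1 := mul_le_one₀ hc.2 gate_nonneg (gate_le_one (m := m + 1) hx)
  rw [abs_le]
  constructor <;> nlinarith

lemma exists_abs_flow_eq_one {l : ℕ} (h : ∃ i : Fin n, l ≤ (i : ℕ) ∧ 1 / 2 ≤ |x i|)
    (hs : 1 ≤ s) : ∃ i : Fin n, l ≤ (i : ℕ) ∧ |flow x s i| = 1 := by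
  obtain ⟨i, hl, hi, hgate⟩ := exists_gate_eq_zero h
  exact ⟨i, hl, by rw [flow_apply_of_gate_eq_zero hgate, min_eq_right hs, abs_stretch_one hi]⟩

lemma tailProd_flow_eq_zero {l : ℕ} (h : tailProd x l = 0) (hs : 0 ≤ s) :
    tailProd (flow x s) l = 0 := by
  obtain ⟨i, hl, hi⟩ := (tailProd_eq_zero_iff x l).1 h
  refine (tailProd_eq_zero_iff _ l).2 ?_
  rcases le_total s 1 with hs1 | hs1
  · exact ⟨i, hl, by rw [flow_apply_of_le_one hs1, stretch_of_abs_eq_one hs hi, hi]⟩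
  · exact exists_abs_flow_eq_one ⟨i, hl, by rw [hi]; norm_num⟩ hs1

lemma continuous_flow : Continuous fun p : EuclideanSpace ℝ (Fin n) × ℝ => flow p.1 p.2 := by
  refine (PiLp.continuous_toLp 2 _).comp (continuous_pi fun m => ?_)
  have hcoord : Continuous fun p : EuclideanSpace ℝ (Fin n) × ℝ => p.1 m :=
    ((continuous_apply m).comp (PiLp.continuous_ofLp 2 _)).comp continuous_fst
  have hstretch : Continuous fun p : EuclideanSpace ℝ (Fin n) × ℝ => stretch (min p.2 1) (p.1 m) :=
    continuous_stretch.comp ((continuous_snd.min continuous_const).prodMk hcoord)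
  have hlift : Continuous fun p : EuclideanSpace ℝ (Fin n) × ℝ =>
      (Set.projIcc (0 : ℝ) 1 zero_le_one (p.2 - 1) : ℝ) :=
    continuous_subtype_val.comp (continuous_projIcc.comp (continuous_snd.sub continuous_const))
  exact hstretch.add
    ((hlift.mul ((continuous_gate _).comp continuous_fst)).mul (continuous_const.sub hstretch))

lemma gate_eq_of_phi_eq (hx : x ∈ cube n) (hx' : x' ∈ cube n) (h : phi n x = phi n x')
    (j : Fin n) : gate x (j + 1) = gate x' (j + 1) := by
  rw [gate, gate, tailProd_eq_of_phi_eq hx hx' h j.isLt]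

lemma flow_apply_eq_of_phi_eq (hx : x ∈ cube n) (hx' : x' ∈ cube n) (h : phi n x = phi n x')
    {j : Fin n} (hj : x j = x' j) (s : ℝ) : flow x s j = flow x' s j := by
  rw [flow_apply, flow_apply, hj, gate_eq_of_phi_eq hx hx' h]

lemma tailProd_flow_eq_of_phi_eq (hx : x ∈ cube n) (hx' : x' ∈ cube n)
    (h : phi n x = phi n x') (hs : 0 ≤ s) (m : ℕ) :
    tailProd (flow x s) m = tailProd (flow x' s) m := by
  by_cases hall : ∀ i : Fin n, m ≤ (i : ℕ) → x i = x' i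
  · exact prod_congr rfl fun i hi => by
      rw [flow_apply_eq_of_phi_eq hx hx' h (hall i (mem_filter.1 hi).2)]
  · push Not at hall
    obtain ⟨i, hi, hne⟩ := hall
    have h0 := (eq_or_tailProd_eq_zero_of_phi_eq hx hx' h i).resolve_left hne
    have h0' : tailProd x' (i + 1) = 0 := tailProd_eq_of_phi_eq hx hx' h i.isLt ▸ h0
    rw [tailProd_eq_zero_of_le _ (by omega) (tailProd_flow_eq_zero h0 hs),
      tailProd_eq_zero_of_le _ (by omega) (tailProd_flow_eq_zero h0' hs)]

lemma phi_flow_eq_of_phi_eq (hx : x ∈ cube n) (hx' : x' ∈ cube n) (h : phi n x = phi n x')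
    (hs : 0 ≤ s) : phi n (flow x s) = phi n (flow x' s) := by
  ext j
  rw [phi_apply (flow_mem_cube hx s), phi_apply (flow_mem_cube hx' s),
    ← tailProd_flow_eq_of_phi_eq hx hx' h hs]
  rcases eq_or_tailProd_eq_zero_of_phi_eq hx hx' h j with hj | hj
  · rw [flow_apply_eq_of_phi_eq hx hx' h hj]
  · rw [tailProd_flow_eq_zero hj hs, Real.sqrt_zero, mul_zero, mul_zero]

lemma flow_two_eq_of_phi_eq (hx : x ∈ cube n) (hx' : x' ∈ cube n) (h : phi n x = phi n x') :
    flow x 2 = flow x' 2 := by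
  ext j
  rcases eq_or_tailProd_eq_zero_of_phi_eq hx hx' h j with hj | hj
  · exact flow_apply_eq_of_phi_eq hx hx' h hj 2
  · have hj' : tailProd x' (j + 1) = 0 := tailProd_eq_of_phi_eq hx hx' h j.isLt ▸ hj
    rw [flow_two_apply, flow_two_apply, gate_eq_one hj, gate_eq_one hj']
    ring

lemma phi_flow_mem_globeSkel (hx : x ∈ cube n) {k : ℕ} (h : phi n x ∈ globeSkel n k)
    (hs : 0 ≤ s) : phi n (flow x s) ∈ globeSkel n k :=
  (phi_mem_globeSkel_iff (flow_mem_cube hx s)).2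
    (tailProd_flow_eq_zero ((phi_mem_globeSkel_iff hx).1 h) hs)

lemma flow_two_phiSection_mem_cubeSkel {z : EuclideanSpace ℝ (Fin n)} {k : ℕ}
    (hz : z ∈ globeSkel n k) (hk : k < n) : flow (phiSection z) 2 ∈ cubeSkel n k := by
  obtain ⟨hnorm, hzero⟩ := hz
  set Q := n - k - 1
  have hT : ∀ j ≤ Q, tailNormSq z j = 1 := fun j hj => by
    rw [tailNormSq_eq_norm_sq z fun i hi => hzero i (by omega), hnorm, one_pow]
  have hfirst : ∀ j : Fin n, (j : ℕ) < Q → flow (phiSection z) 2 j = 1 := fun j hj =>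
    flow_apply_of_eq_one (phiSection_apply_of_eq_one (hT _ hj)) zero_le_two
  obtain ⟨i, hiQ, hi⟩ := exists_abs_flow_eq_one (x := phiSection z) (l := Q)
    ⟨⟨Q, by omega⟩, le_rfl, by rw [abs_phiSection_apply hnorm.le (hT Q le_rfl)]; norm_num⟩
    one_le_two
  refine ⟨flow_mem_cube (phiSection_mem_cube hnorm.le) 2, ?_⟩
  calc n - k = #(insert i (univ.filter fun j : Fin n => (j : ℕ) < Q)) := by
        rw [card_insert_of_notMem (by simp; omega), Fin.card_filter_val_lt]
        omega
    _ ≤ #(univ.filter fun j : Fin n => |flow (phiSection z) 2 j| = 1) :=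
        card_le_card <| insert_subset (by simp [hi]) fun j hj => by
          simp [hfirst j (mem_filter.1 hj).2]

lemma abs_phiSection_pole_apply {a : ℝ} (ha : |a| = 1) (j : Fin n) :
    |phiSection (pole n a) j| = 1 := by
  rw [phiSection_pole ha]
  split_ifs
  exacts [ha, abs_one]

lemma flow_phiSection_pole {a : ℝ} (ha : |a| = 1) (hs : 0 ≤ s) :
    flow (phiSection (pole n a)) s = phiSection (pole n a) := by
  ext j
  by_cases hj : (j : ℕ) = n - 1
  · have hgate : gate (phiSection (pole n a)) (j + 1) = 0 := gate_of_le (by omega)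
    rw [flow_apply_of_gate_eq_zero hgate,
      stretch_of_abs_eq_one (le_min hs zero_le_one) (abs_phiSection_pole_apply ha j)]
  · have h1 : phiSection (pole n a) j = 1 := (phiSection_pole ha j).trans (if_neg hj)
    rw [flow_apply_of_eq_one h1 hs, h1]

end Flow

/-- The flow runs forwards on `[0, 1/3]`, rests at time `2` on `[1/3, 2/3]` while `H` is run
(see `homotopyTime`), and runs backwards on `[2/3, 1]`. -/
noncomputable def flowTime (u : ℝ) : ℝ := min 2 (6 * min u (1 - u))

noncomputable def homotopyTime (u : ℝ) : ℝ := Set.projIcc 0 1 zero_le_one (3 * u - 1)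

lemma flowTime_nonneg {u : ℝ} (hu : u ∈ Set.Icc (0 : ℝ) 1) : 0 ≤ flowTime u :=
  le_min zero_le_two (mul_nonneg (by norm_num) (le_min hu.1 (sub_nonneg.2 hu.2)))

lemma flowTime_zero : flowTime 0 = 0 := by norm_num [flowTime]

lemma flowTime_one : flowTime 1 = 0 := by norm_num [flowTime]

lemma homotopyTime_mem (u : ℝ) : homotopyTime u ∈ Set.Icc (0 : ℝ) 1 :=
  (Set.projIcc (0 : ℝ) 1 zero_le_one (3 * u - 1)).2

lemma homotopyTime_zero : homotopyTime 0 = 0 := by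
  rw [homotopyTime, Set.projIcc_of_le_left _ (by norm_num)]

lemma homotopyTime_one : homotopyTime 1 = 1 := by
  rw [homotopyTime, Set.projIcc_of_right_le _ (by norm_num)]

lemma homotopyTime_eq_zero_or_eq_one_or_flowTime_eq_two (u : ℝ) :
    homotopyTime u = 0 ∨ homotopyTime u = 1 ∨ flowTime u = 2 := by
  rcases le_or_gt u (1 / 3) with h | h
  · exact Or.inl (by rw [homotopyTime, Set.projIcc_of_le_left _ (by linarith)])
  rcases le_or_gt (2 / 3) u with h' | h'
  · exact Or.inr (Or.inl (by rw [homotopyTime, Set.projIcc_of_right_le _ (by linarith)]))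
  · refine Or.inr (Or.inr (min_eq_left ?_))
    linarith [le_min h.le (by linarith : (1 : ℝ) / 3 ≤ 1 - u)]

lemma continuous_flowTime : Continuous flowTime :=
  continuous_const.min (continuous_const.mul (continuous_id.min (continuous_const.sub continuous_id)))

lemma continuous_homotopyTime : Continuous homotopyTime :=
  continuous_subtype_val.comp
    (continuous_projIcc.comp ((continuous_const.mul continuous_id).sub continuous_const))

noncomputable def cubeHomotopy {X : Type*} (H : EuclideanSpace ℝ (Fin n) × ℝ → X)
    (p : EuclideanSpace ℝ (Fin n) × ℝ) : X :=
  H (flow p.1 (flowTime p.2), homotopyTime p.2)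

section CubeHomotopy

variable {X : Type*} {H : EuclideanSpace ℝ (Fin n) × ℝ → X}
  {α β : EuclideanSpace ℝ (Fin n) → X} {x x' : EuclideanSpace ℝ (Fin n)} {u : ℝ}

lemma cubeHomotopy_zero (hx : x ∈ cube n) : cubeHomotopy H (x, 0) = H (x, 0) := by
  rw [cubeHomotopy, flowTime_zero, homotopyTime_zero, flow_zero hx]

lemma cubeHomotopy_one (hx : x ∈ cube n) : cubeHomotopy H (x, 1) = H (x, 1) := by
  rw [cubeHomotopy, flowTime_one, homotopyTime_one, flow_zero hx]

lemma continuousOn_cubeHomotopy [TopologicalSpace X] (hHc : ContinuousOn H (cube n ×ˢ Set.Icc (0 : ℝ) 1)) :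
    ContinuousOn (cubeHomotopy H) (cube n ×ˢ Set.Icc (0 : ℝ) 1) :=
  hHc.comp (continuous_flow.comp (continuous_fst.prodMk (continuous_flowTime.comp continuous_snd))
    |>.prodMk (continuous_homotopyTime.comp continuous_snd)).continuousOn
    fun _ hp => ⟨flow_mem_cube hp.1 _, homotopyTime_mem _⟩

lemma cubeHomotopy_eq_of_phi_eq (hH0 : ∀ x ∈ cube n, H (x, 0) = α (phi n x))
    (hH1 : ∀ x ∈ cube n, H (x, 1) = β (phi n x)) (hx : x ∈ cube n) (hx' : x' ∈ cube n)
    (h : phi n x = phi n x') (hu : u ∈ Set.Icc (0 : ℝ) 1) :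
    cubeHomotopy H (x, u) = cubeHomotopy H (x', u) := by
  have hs := flowTime_nonneg hu
  rcases homotopyTime_eq_zero_or_eq_one_or_flowTime_eq_two u with h0 | h1 | h2
  · rw [cubeHomotopy, cubeHomotopy, h0, hH0 _ (flow_mem_cube hx _), hH0 _ (flow_mem_cube hx' _),
      phi_flow_eq_of_phi_eq hx hx' h hs]
  · rw [cubeHomotopy, cubeHomotopy, h1, hH1 _ (flow_mem_cube hx _), hH1 _ (flow_mem_cube hx' _),
      phi_flow_eq_of_phi_eq hx hx' h hs]
  · rw [cubeHomotopy, cubeHomotopy, h2, flow_two_eq_of_phi_eq hx hx' h]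

lemma cubeHomotopy_phiSection_mem {k : ℕ} {S : Set X}
    (hH0 : ∀ x ∈ cube n, H (x, 0) = α (phi n x)) (hH1 : ∀ x ∈ cube n, H (x, 1) = β (phi n x))
    (hα : ∀ z ∈ globeSkel n k, α z ∈ S) (hβ : ∀ z ∈ globeSkel n k, β z ∈ S)
    (hH : ∀ t ∈ Set.Icc (0 : ℝ) 1, ∀ x ∈ cubeSkel n k, H (x, t) ∈ S)
    {z : EuclideanSpace ℝ (Fin n)} (hz : z ∈ globeSkel n k) (hk : k < n)
    (hu : u ∈ Set.Icc (0 : ℝ) 1) : cubeHomotopy H (phiSection z, u) ∈ S := by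
  have hx := phiSection_mem_cube hz.1.le
  have hphi : phi n (phiSection z) ∈ globeSkel n k := (phi_phiSection hz.1.le).symm ▸ hz
  rcases homotopyTime_eq_zero_or_eq_one_or_flowTime_eq_two u with h0 | h1 | h2
  · rw [cubeHomotopy, h0, hH0 _ (flow_mem_cube hx _)]
    exact hα _ (phi_flow_mem_globeSkel hx hphi (flowTime_nonneg hu))
  · rw [cubeHomotopy, h1, hH1 _ (flow_mem_cube hx _)]
    exact hβ _ (phi_flow_mem_globeSkel hx hphi (flowTime_nonneg hu))
  · rw [cubeHomotopy, h2]
    exact hH _ (homotopyTime_mem u) _ (flow_two_phiSection_mem_cubeSkel hz hk)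

lemma cubeHomotopy_phiSection_pole
    (hHvert : ∀ v : EuclideanSpace ℝ (Fin n), (∀ i : Fin n, |v i| = 1) →
      ∀ t ∈ Set.Icc (0 : ℝ) 1, H (v, t) = H (v, 0))
    {a : ℝ} (ha : |a| = 1) (hu : u ∈ Set.Icc (0 : ℝ) 1) :
    cubeHomotopy H (phiSection (pole n a), u) = cubeHomotopy H (phiSection (pole n a), 0) := by
  rw [cubeHomotopy, cubeHomotopy, flow_phiSection_pole ha (flowTime_nonneg hu),
    flowTime_zero, flow_phiSection_pole ha le_rfl, homotopyTime_zero]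
  exact hHvert _ (abs_phiSection_pole_apply ha) _ (homotopyTime_mem u)

end CubeHomotopy

lemma isCompact_cube (n : ℕ) : IsCompact (cube n) := by
  have : cube n = (PiLp.homeomorph 2 fun _ : Fin n => ℝ) ⁻¹' Set.univ.pi fun _ => Set.Icc (-1) 1 := by
    ext x
    simp only [cube, Set.mem_preimage, Set.mem_univ_pi, Set.mem_Icc, abs_le]
    rfl
  rw [this, Homeomorph.isCompact_preimage]
  exact isCompact_univ_pi fun _ => isCompact_Icc

lemma continuousOn_of_continuousOn_comp {A B Y : Type*} [TopologicalSpace A]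
    [TopologicalSpace B] [T2Space B] [TopologicalSpace Y] {K : Set A} {D : Set B} {q : A → B}
    {g : B → Y} (hK : IsCompact K) (hq : ContinuousOn q K) (hKD : Set.MapsTo q K D)
    (hsurj : Set.SurjOn q K D) (hg : ContinuousOn (g ∘ q) K) : ContinuousOn g D := by
  have : CompactSpace K := isCompact_iff_compactSpace.1 hK
  have hq' := hq.mapsToRestrict hKD
  have hquot := hq'.isClosedMap.isQuotientMap hq' (hKD.restrict_surjective_iff.2 hsurj)
  rw [continuousOn_iff_continuous_domRestrict, hquot.continuous_iff]
  exact continuousOn_iff_continuous_domRestrict.1 hg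

end CubeGlobe

open CubeGlobe

theorem globular_homotopy_of_cubical_homotopy_general {X : Type*} [TopologicalSpace X]
    (F : ℕ → Set X) (n : ℕ)
    (α β : EuclideanSpace ℝ (Fin n) → X)
    (hαskel : ∀ k < n, ∀ z ∈ globeSkel n k, α z ∈ F k)
    (hβskel : ∀ k < n, ∀ z ∈ globeSkel n k, β z ∈ F k)
    (H : EuclideanSpace ℝ (Fin n) × ℝ → X)
    (hHc : ContinuousOn H (cube n ×ˢ Set.Icc (0 : ℝ) 1))
    (hH0 : ∀ x ∈ cube n, H (x, 0) = α (phi n x))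
    (hH1 : ∀ x ∈ cube n, H (x, 1) = β (phi n x))
    (hHskel : ∀ t ∈ Set.Icc (0 : ℝ) 1, ∀ k < n, ∀ x ∈ cubeSkel n k, H (x, t) ∈ F k)
    (hHtop : ∀ t ∈ Set.Icc (0 : ℝ) 1, ∀ m, n ≤ m → ∀ x ∈ cube n, H (x, t) ∈ F m)
    (hHvert : ∀ v : EuclideanSpace ℝ (Fin n), (∀ i : Fin n, |v i| = 1) →
        ∀ t ∈ Set.Icc (0 : ℝ) 1, H (v, t) = H (v, 0)) :
    ∃ L : EuclideanSpace ℝ (Fin n) × ℝ → X,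
      ContinuousOn L (disk n ×ˢ Set.Icc (0 : ℝ) 1) ∧
      (∀ z ∈ disk n, L (z, 0) = α z ∧ L (z, 1) = β z) ∧
      (∀ t ∈ Set.Icc (0 : ℝ) 1, ∀ k < n, ∀ z ∈ globeSkel n k, L (z, t) ∈ F k) ∧
      (∀ t ∈ Set.Icc (0 : ℝ) 1, ∀ m, n ≤ m → ∀ z ∈ disk n, L (z, t) ∈ F m) ∧
      (∀ a : ℝ, a = 1 ∨ a = -1 →
        ∀ t ∈ Set.Icc (0 : ℝ) 1, L (pole n a, t) = L (pole n a, 0)) := by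
  refine ⟨fun p => cubeHomotopy H (phiSection p.1, p.2), ?_, fun z hz => ?_,
    fun t ht k hk z hz => ?_, fun t _ m hm z hz => ?_, fun a ha t ht => ?_⟩
  · refine continuousOn_of_continuousOn_comp (q := Prod.map (phi n) id)
      ((isCompact_cube n).prod isCompact_Icc) ((continuous_phi n).prodMap continuous_id).continuousOn
      (fun p hp => ⟨norm_phi_le_one hp.1, hp.2⟩)
      (fun p hp => ⟨(phiSection p.1, p.2), ⟨phiSection_mem_cube hp.1, hp.2⟩, by
        simp [phi_phiSection (show ‖p.1‖ ≤ 1 from hp.1)]⟩)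
      ((continuousOn_cubeHomotopy hHc).congr fun p hp => ?_)
    have hphi := norm_phi_le_one hp.1
    exact cubeHomotopy_eq_of_phi_eq hH0 hH1 (phiSection_mem_cube hphi) hp.1
      (phi_phiSection hphi) hp.2
  · have hx := phiSection_mem_cube hz
    exact ⟨(cubeHomotopy_zero hx).trans ((hH0 _ hx).trans (congrArg α (phi_phiSection hz))),
      (cubeHomotopy_one hx).trans ((hH1 _ hx).trans (congrArg β (phi_phiSection hz)))⟩
  · exact cubeHomotopy_phiSection_mem hH0 hH1 (hαskel k hk) (hβskel k hk)
      (fun t ht x hx => hHskel t ht k hk x hx) hz hk ht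
  · exact hHtop _ (homotopyTime_mem t) m hm _ (flow_mem_cube (phiSection_mem_cube hz) _)
  · exact cubeHomotopy_phiSection_pole hHvert (by rcases ha with rfl | rfl <;> simp) ht

/-- injectivity of the comparison from globular to cubical homotopy
classes. Given a filtration `F` on `X`, globe-filtered continuous maps `α β : Dⁿ → X`,
and a homotopy `H : Iⁿ × [0,1] → X` from `α ∘ φₙ` to `β ∘ φₙ` through cube-filtered maps,
rel the vertices of `Iⁿ`, there is a homotopy `L : Dⁿ × [0,1] → X` from `α` to `β`
through globe-filtered maps, rel the two vertices `(0,…,0,±1)` of the globe. -/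
theorem globular_homotopy_of_cubical_homotopy {X : Type*} [TopologicalSpace X]
    (F : ℕ → Set X) (hF : Monotone F) (n : ℕ) (hn : 1 ≤ n)
    (α β : EuclideanSpace ℝ (Fin n) → X)
    (hαc : ContinuousOn α (disk n)) (hβc : ContinuousOn β (disk n))
    (hαskel : ∀ k < n, ∀ z ∈ globeSkel n k, α z ∈ F k)
    (hαtop : ∀ m, n ≤ m → ∀ z ∈ disk n, α z ∈ F m)
    (hβskel : ∀ k < n, ∀ z ∈ globeSkel n k, β z ∈ F k)
    (hβtop : ∀ m, n ≤ m → ∀ z ∈ disk n, β z ∈ F m)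
    (H : EuclideanSpace ℝ (Fin n) × ℝ → X)
    (hHc : ContinuousOn H (cube n ×ˢ Set.Icc (0 : ℝ) 1))
    (hH0 : ∀ x ∈ cube n, H (x, 0) = α (phi n x))
    (hH1 : ∀ x ∈ cube n, H (x, 1) = β (phi n x))
    (hHskel : ∀ t ∈ Set.Icc (0 : ℝ) 1, ∀ k < n, ∀ x ∈ cubeSkel n k, H (x, t) ∈ F k)
    (hHtop : ∀ t ∈ Set.Icc (0 : ℝ) 1, ∀ m, n ≤ m → ∀ x ∈ cube n, H (x, t) ∈ F m)
    (hHvert : ∀ v : EuclideanSpace ℝ (Fin n), (∀ i : Fin n, |v i| = 1) →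
        ∀ t ∈ Set.Icc (0 : ℝ) 1, H (v, t) = H (v, 0)) :
    ∃ L : EuclideanSpace ℝ (Fin n) × ℝ → X,
      ContinuousOn L (disk n ×ˢ Set.Icc (0 : ℝ) 1) ∧
      (∀ z ∈ disk n, L (z, 0) = α z ∧ L (z, 1) = β z) ∧
      (∀ t ∈ Set.Icc (0 : ℝ) 1, ∀ k < n, ∀ z ∈ globeSkel n k, L (z, t) ∈ F k) ∧
      (∀ t ∈ Set.Icc (0 : ℝ) 1, ∀ m, n ≤ m → ∀ z ∈ disk n, L (z, t) ∈ F m) ∧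
      (∀ a : ℝ, a = 1 ∨ a = -1 →
        ∀ t ∈ Set.Icc (0 : ℝ) 1, L (pole n a, t) = L (pole n a, 0)) :=
  globular_homotopy_of_cubical_homotopy_general F n α β hαskel hβskel H hHc hH0 hH1 hHskel hHtop
    hHvert
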